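/- arXiv:2106.12051 — 7 statements merged into one kernel-verified Lean document; each statement's English description precedes it below -/
import Mathlib

section
/- For every k ∈ {0,1,…,n} and every t with t_k ≤ t < t_{k+1} (including t = T when k = n), the asset with dividends satisfies S^{(y,δ)}_t = π_{0,k}·S_t − Σ_{i=1}^{k} δ_i·π_{i,k}·S_t/S_{t_i}, where π_{i,k} = ∏_{j=i+1}^{k}(1 − y_j). -/
open Finset

/-- For every `k ∈ {0,…,n}` and every `t` with `t_k ≤ t < t_{k+1}`
(including `t = T` when `k = n`), the asset with dividends satisfies
`S^{(y,δ)}_t = π_{0,k}·S_t − Σ_{i=1}^{k} δ_i·π_{i,k}·S_t/S_{t_i}`. -/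
theorem statement0
    (n : ℕ) (hn : 1 ≤ n) (T : ℝ) (hT : 0 < T)
    (td : ℕ → ℝ) (htd0 : td 0 = 0)
    (htdmono : ∀ i, i < n → td i < td (i + 1)) (htdn : td n ≤ T)
    (y δ : ℕ → ℝ)
    (hy : ∀ i, 1 ≤ i → i ≤ n → 0 ≤ y i ∧ y i < 1)
    (hδ : ∀ i, 1 ≤ i → i ≤ n → 0 ≤ δ i)
    (S : ℝ → ℝ) (hS : ∀ u, 0 ≤ u → u ≤ T → 0 < S u)
    (Sd : ℝ → ℝ)
    -- `S^{(y,δ)}_t = S_t` on `[0, t_1)`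
    (hSd0 : ∀ u, 0 ≤ u → u < td 1 → Sd u = S u)
    -- jump at the dividend date `t_i`
    (hjump : ∀ i, 1 ≤ i → i ≤ n →
      Sd (td i) = (1 - y i) * Sd (td (i - 1)) * S (td i) / S (td (i - 1)) - δ i)
    -- lognormal propagation on `[t_i, t_{i+1})` (with `t_{n+1} := T`, last interval closed)
    (hprop : ∀ i, 1 ≤ i → i ≤ n → ∀ u, td i ≤ u →
      ((i < n ∧ u < td (i + 1)) ∨ (i = n ∧ u ≤ T)) →
      Sd u = Sd (td i) * S u / S (td i)) :
    ∀ k, k ≤ n → ∀ u, td k ≤ u →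
      ((k < n ∧ u < td (k + 1)) ∨ (k = n ∧ u ≤ T)) →
      Sd u = (∏ j ∈ Finset.Icc 1 k, (1 - y j)) * S u
        - ∑ i ∈ Finset.Icc 1 k,
            δ i * (∏ j ∈ Finset.Icc (i + 1) k, (1 - y j)) * S u / S (td i) := by
  -- monotonicity of dividend dates
  have hmono : ∀ j, j ≤ n → ∀ i, i ≤ j → td i ≤ td j := by
    intro j
    induction j with
    | zero => intro _ i hi; have : i = 0 := by omega
              rw [this]
    | succ m ih =>
      intro hj i hi
      rcases Nat.lt_succ_iff_lt_or_eq.mp (Nat.lt_succ_of_le hi) with h | h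
      · exact le_trans (ih (by omega) i (by omega)) (le_of_lt (htdmono m (by omega)))
      · rw [h]
  have htdpos : ∀ i, i ≤ n → 0 < S (td i) := by
    intro i hi
    refine hS _ ?_ (le_trans (hmono n le_rfl i hi) htdn)
    have := hmono i hi 0 (Nat.zero_le i)
    rwa [htd0] at this
  intro k
  induction k with
  | zero =>
    intro _ u hu hcase
    have hu0 : 0 ≤ u := by rwa [htd0] at hu
    have hu1 : u < td 1 := by
      rcases hcase with ⟨_, h⟩ | ⟨h, _⟩
      · exact h
      · omega
    simp [hSd0 u hu0 hu1]
  | succ k ih =>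
    intro hk u hu hcase
    have hk1 : 1 ≤ k + 1 := by omega
    have hkn : k + 1 ≤ n := hk
    -- value at td (k+1) via jump and induction hypothesis at td k
    have hSdk : Sd (td k) = (∏ j ∈ Finset.Icc 1 k, (1 - y j)) * S (td k)
        - ∑ i ∈ Finset.Icc 1 k,
            δ i * (∏ j ∈ Finset.Icc (i + 1) k, (1 - y j)) * S (td k) / S (td i) := by
      apply ih (by omega) (td k) le_rfl
      exact Or.inl ⟨by omega, htdmono k (by omega)⟩
    have hj := hjump (k + 1) hk1 hkn
    simp only [Nat.add_sub_cancel] at hj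
    have hpropu := hprop (k + 1) hk1 hkn u hu hcase
    set P := ∏ j ∈ Finset.Icc 1 k, (1 - y j) with hP
    set Q := ∑ i ∈ Finset.Icc 1 k,
        δ i * (∏ j ∈ Finset.Icc (i + 1) k, (1 - y j)) / S (td i) with hQ
    have hA : S (td (k + 1)) ≠ 0 := ne_of_gt (htdpos (k + 1) hkn)
    have hB : S (td k) ≠ 0 := ne_of_gt (htdpos k (by omega))
    have hSdk' : Sd (td k) = P * S (td k) - S (td k) * Q := by
      rw [hSdk, hQ, Finset.mul_sum]
      congr 1
      apply Finset.sum_congr rfl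
      intro i _
      ring
    -- rewrite the goal RHS using Q
    have hprodsucc : (∏ j ∈ Finset.Icc 1 (k + 1), (1 - y j))
        = P * (1 - y (k + 1)) := by
      rw [hP, Finset.prod_Icc_succ_top (by omega : 1 ≤ k + 1)]
    have hsumsucc : (∑ i ∈ Finset.Icc 1 (k + 1),
          δ i * (∏ j ∈ Finset.Icc (i + 1) (k + 1), (1 - y j)) * S u / S (td i))
        = (1 - y (k + 1)) * (S u * Q) + δ (k + 1) * S u / S (td (k + 1)) := by
      rw [Finset.sum_Icc_succ_top (by omega : 1 ≤ k + 1)]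
      congr 1
      · rw [hQ, Finset.mul_sum, Finset.mul_sum]
        apply Finset.sum_congr rfl
        intro i hi
        have hik : i ≤ k := (Finset.mem_Icc.mp hi).2
        rw [Finset.prod_Icc_succ_top (by omega : i + 1 ≤ k + 1)]
        ring
      · rw [show Finset.Icc (k + 1 + 1) (k + 1) = ∅ by
          apply Finset.Icc_eq_empty; omega]
        simp
    rw [hprodsucc, hsumsucc, hpropu, hj, hSdk']
    field_simp
    ring
end

section
/- The maturity value of the asset with dividends decomposes around the Lehman proxy as S^{(y,δ)}_T = S̄_T + Σ_{i=1}^{n} ((T − t_i)/T)·δ̂_i·(M_T − M_T/M_{t_i}) + Σ_{i=1}^{n} (t_i/T)·δ̂_i·(1 − M_T/M_{t_i}). -/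
open Finset

/-!
Divide the asset with dividends by the asset without: between dividend dates the ratio
`R = S^{(y,δ)} / S` is constant, and at `t_i` it jumps to `(1 - y_i) R - δ_i / S_{t_i}`.
Solving this linear recurrence gives
`S^{(y,δ)}_T = π_{0,n} S_T - Σ_i δ_i π_{i,n} S_T / S_{t_i}`, and
`S_T / S_{t_i} = (D_{t_i} / D_T) (M_T / M_{t_i})` turns the `i`-th term into `δ̂_i M_T / M_{t_i}`.
The decomposition is then the identity `q = ((T - t)/T) (M_T - (M_T - q)) + (t/T) (1 - (1 - q))`
applied to `q = M_T / M_{t_i}`.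
-/

theorem eq_prod_mul_add_sum_of_recurrence {R : Type*} [CommSemiring R] {a b r : ℕ → R} {n : ℕ}
    (h : ∀ k < n, r (k + 1) = a (k + 1) * r k + b (k + 1)) :
    ∀ k ≤ n, r k = (∏ j ∈ Icc 1 k, a j) * r 0 + ∑ i ∈ Icc 1 k, b i * ∏ j ∈ Icc (i + 1) k, a j := by
  intro k hk
  induction k with
  | zero => simp
  | succ k ih =>
    have hsum : ∑ i ∈ Icc 1 k, b i * ∏ j ∈ Icc (i + 1) (k + 1), a j
        = (∑ i ∈ Icc 1 k, b i * ∏ j ∈ Icc (i + 1) k, a j) * a (k + 1) := by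
      rw [sum_mul]
      refine sum_congr rfl fun i hi => ?_
      rw [prod_Icc_succ_top (by simp at hi; omega), mul_assoc]
    rw [h k (by omega), ih (by omega), prod_Icc_succ_top (by omega),
      sum_Icc_succ_top (by omega), hsum, Icc_eq_empty (a := k + 1 + 1) (b := k + 1) (by omega),
      prod_empty]
    ring

theorem mem_Icc_of_lt_succ {β : Type*} [Preorder β] {f : ℕ → β} {n : ℕ}
    (hf : ∀ i, i < n → f i < f (i + 1)) {i : ℕ} (hi : i ≤ n) : f i ∈ Set.Icc (f 0) (f n) := by
  have hmono : MonotoneOn f (Set.Iic n) :=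
    (strictMonoOn_Iic_of_lt_succ fun m hm => by simpa using hf m hm).monotoneOn
  exact ⟨hmono (Nat.zero_le n) hi (Nat.zero_le i), hmono hi (Set.mem_Iic.2 le_rfl) hi⟩

theorem maturity_value_eq_sub_sum_mul
    (n : ℕ) (hn : 1 ≤ n) (T : ℝ) (td : ℕ → ℝ) (htd0 : td 0 = 0)
    (htdmono : ∀ i, i < n → td i < td (i + 1)) (htdn : td n ≤ T)
    (y δ : ℕ → ℝ) (S : ℝ → ℝ) (hS : ∀ u, 0 ≤ u → u ≤ T → 0 < S u) (Sd : ℝ → ℝ)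
    (hSd0 : ∀ u, 0 ≤ u → u < td 1 → Sd u = S u)
    (hjump : ∀ i, 1 ≤ i → i ≤ n →
      Sd (td i) = (1 - y i) * Sd (td (i - 1)) * S (td i) / S (td (i - 1)) - δ i)
    (hprop : ∀ i, 1 ≤ i → i ≤ n → ∀ u, td i ≤ u →
      ((i < n ∧ u < td (i + 1)) ∨ (i = n ∧ u ≤ T)) →
      Sd u = Sd (td i) * S u / S (td i)) :
    Sd T = ((∏ j ∈ Icc 1 n, (1 - y j))
      - ∑ i ∈ Icc 1 n, δ i / S (td i) * ∏ j ∈ Icc (i + 1) n, (1 - y j)) * S T := by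
  have hSne : ∀ i ≤ n, S (td i) ≠ 0 := fun i hi =>
    have hmem := Set.Icc_subset_Icc htd0.ge htdn (mem_Icc_of_lt_succ htdmono hi)
    (hS _ hmem.1 hmem.2).ne'
  have hratio0 : Sd (td 0) / S (td 0) = 1 := by
    rw [htd0, hSd0 0 le_rfl (htd0 ▸ htdmono 0 hn), div_self (htd0 ▸ hSne 0 (Nat.zero_le n))]
  have hratio : ∀ k < n, Sd (td (k + 1)) / S (td (k + 1))
      = (1 - y (k + 1)) * (Sd (td k) / S (td k)) + -δ (k + 1) / S (td (k + 1)) := by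
    intro k hk
    have hSk := hSne k hk.le
    have hSk1 := hSne (k + 1) hk
    rw [hjump (k + 1) (by omega) hk, Nat.add_sub_cancel]
    field_simp
    ring
  have hclosed := eq_prod_mul_add_sum_of_recurrence
    (a := fun j => 1 - y j) (b := fun i => -δ i / S (td i))
    (r := fun k => Sd (td k) / S (td k)) hratio n le_rfl
  rw [hratio0, mul_one] at hclosed
  rw [hprop n hn le_rfl T htdn (Or.inr ⟨rfl, le_rfl⟩), mul_div_right_comm, hclosed,
    sub_eq_add_neg, ← sum_neg_distrib]
  simp only [neg_div, neg_mul]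

theorem sub_sum_mul_eq_lehman_add_sum_add_sum {ι : Type*} (s : Finset ι) {T : ℝ} (hT : T ≠ 0)
    (t c q : ι → ℝ) (P m : ℝ) :
    P * m - ∑ i ∈ s, c i * q i
      = ((P - ∑ i ∈ s, ((T - t i) / T) * c i) * m - ∑ i ∈ s, (t i / T) * c i)
        + ∑ i ∈ s, ((T - t i) / T) * c i * (m - q i)
        + ∑ i ∈ s, (t i / T) * c i * (1 - q i) := by
  have hterm : ∀ i ∈ s, ((T - t i) / T) * c i * (m - q i) + (t i / T) * c i * (1 - q i)
      = ((T - t i) / T) * c i * m + (t i / T) * c i - c i * q i := by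
    intro i _
    field_simp
    ring
  rw [add_assoc, ← sum_add_distrib, sum_congr rfl hterm, sum_sub_distrib, sum_add_distrib,
    ← sum_mul]
  ring

theorem statement2_general
    (n : ℕ) (hn : 1 ≤ n) (T : ℝ) (hT : 0 < T)
    (td : ℕ → ℝ) (htd0 : td 0 = 0)
    (htdmono : ∀ i, i < n → td i < td (i + 1)) (htdn : td n ≤ T)
    (y δ : ℕ → ℝ)
    (S : ℝ → ℝ) (hS : ∀ u, 0 ≤ u → u ≤ T → 0 < S u)
    (Sd : ℝ → ℝ)
    (hSd0 : ∀ u, 0 ≤ u → u < td 1 → Sd u = S u)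
    (hjump : ∀ i, 1 ≤ i → i ≤ n →
      Sd (td i) = (1 - y i) * Sd (td (i - 1)) * S (td i) / S (td (i - 1)) - δ i)
    (hprop : ∀ i, 1 ≤ i → i ≤ n → ∀ u, td i ≤ u →
      ((i < n ∧ u < td (i + 1)) ∨ (i = n ∧ u ≤ T)) →
      Sd u = Sd (td i) * S u / S (td i))
    (M D : ℝ → ℝ)
    (hSM : ∀ u, 0 ≤ u → u ≤ T → S u = S 0 * M u / D u) :
    Sd T = (((∏ j ∈ Finset.Icc 1 n, (1 - y j)) * S 0 / D T
              - ∑ i ∈ Finset.Icc 1 n, ((T - td i) / T)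
                  * (δ i * (∏ j ∈ Finset.Icc (i + 1) n, (1 - y j)) * D (td i) / D T)) * M T
            - ∑ i ∈ Finset.Icc 1 n, (td i / T)
                * (δ i * (∏ j ∈ Finset.Icc (i + 1) n, (1 - y j)) * D (td i) / D T))
      + ∑ i ∈ Finset.Icc 1 n,
          ((T - td i) / T) * (δ i * (∏ j ∈ Finset.Icc (i + 1) n, (1 - y j)) * D (td i) / D T)
            * (M T - M T / M (td i))
      + ∑ i ∈ Finset.Icc 1 n,
          (td i / T) * (δ i * (∏ j ∈ Finset.Icc (i + 1) n, (1 - y j)) * D (td i) / D T)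
            * (1 - M T / M (td i)) := by
  have hS0 : S 0 ≠ 0 := (hS 0 le_rfl hT.le).ne'
  have hST := hSM T hT.le le_rfl
  have hterm : ∀ i ∈ Icc 1 n, δ i / S (td i) * (∏ j ∈ Icc (i + 1) n, (1 - y j)) * S T
      = δ i * (∏ j ∈ Icc (i + 1) n, (1 - y j)) * D (td i) / D T * (M T / M (td i)) := by
    intro i hi
    have hmem :=
      Set.Icc_subset_Icc htd0.ge htdn (mem_Icc_of_lt_succ htdmono (mem_Icc.1 hi).2)
    rw [hST, hSM _ hmem.1 hmem.2, mul_div_assoc, mul_div_assoc (S 0)]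
    field_simp
  rw [maturity_value_eq_sub_sum_mul n hn T td htd0 htdmono htdn y δ S hS Sd hSd0 hjump hprop,
    sub_mul, sum_mul, sum_congr rfl hterm, hST, mul_div_right_comm (S 0), ← mul_assoc,
    ← mul_div_assoc]
  exact sub_sum_mul_eq_lehman_add_sum_add_sum _ hT.ne' td _ (fun i => M T / M (td i)) _ _

/-- The maturity value of the asset with dividends decomposes around the
Lehman proxy as
`S^{(y,δ)}_T = S̄_T + Σ_{i=1}^{n} ((T − t_i)/T)·δ̂_i·(M_T − M_T/M_{t_i})
             + Σ_{i=1}^{n} (t_i/T)·δ̂_i·(1 − M_T/M_{t_i})`,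
where `δ̂_i = δ_i·π_{i,n}·D_{t_i}/D_T`, `X^n_T = Σ_i ((T − t_i)/T)·δ̂_i`,
`X^f_T = Σ_i (t_i/T)·δ̂_i` and `S̄_T = (π_{0,n}·S_0/D_T − X^n_T)·M_T − X^f_T`. -/
theorem statement2
    (n : ℕ) (hn : 1 ≤ n) (T : ℝ) (hT : 0 < T)
    (td : ℕ → ℝ) (htd0 : td 0 = 0)
    (htdmono : ∀ i, i < n → td i < td (i + 1)) (htdn : td n ≤ T)
    (y δ : ℕ → ℝ)
    (hy : ∀ i, 1 ≤ i → i ≤ n → 0 ≤ y i ∧ y i < 1)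
    (hδ : ∀ i, 1 ≤ i → i ≤ n → 0 ≤ δ i)
    (S : ℝ → ℝ) (hS : ∀ u, 0 ≤ u → u ≤ T → 0 < S u)
    (Sd : ℝ → ℝ)
    (hSd0 : ∀ u, 0 ≤ u → u < td 1 → Sd u = S u)
    (hjump : ∀ i, 1 ≤ i → i ≤ n →
      Sd (td i) = (1 - y i) * Sd (td (i - 1)) * S (td i) / S (td (i - 1)) - δ i)
    (hprop : ∀ i, 1 ≤ i → i ≤ n → ∀ u, td i ≤ u →
      ((i < n ∧ u < td (i + 1)) ∨ (i = n ∧ u ≤ T)) →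
      Sd u = Sd (td i) * S u / S (td i))
    (M D : ℝ → ℝ)
    (hM : ∀ u, 0 ≤ u → u ≤ T → 0 < M u) (hD : ∀ u, 0 ≤ u → u ≤ T → 0 < D u)
    (hM0 : M 0 = 1) (hD0 : D 0 = 1)
    (hSM : ∀ u, 0 ≤ u → u ≤ T → S u = S 0 * M u / D u) :
    Sd T = (((∏ j ∈ Finset.Icc 1 n, (1 - y j)) * S 0 / D T
              - ∑ i ∈ Finset.Icc 1 n, ((T - td i) / T)
                  * (δ i * (∏ j ∈ Finset.Icc (i + 1) n, (1 - y j)) * D (td i) / D T)) * M T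
            - ∑ i ∈ Finset.Icc 1 n, (td i / T)
                * (δ i * (∏ j ∈ Finset.Icc (i + 1) n, (1 - y j)) * D (td i) / D T))
      + ∑ i ∈ Finset.Icc 1 n,
          ((T - td i) / T) * (δ i * (∏ j ∈ Finset.Icc (i + 1) n, (1 - y j)) * D (td i) / D T)
            * (M T - M T / M (td i))
      + ∑ i ∈ Finset.Icc 1 n,
          (td i / T) * (δ i * (∏ j ∈ Finset.Icc (i + 1) n, (1 - y j)) * D (td i) / D T)
            * (1 - M T / M (td i)) :=
  statement2_general n hn T hT td htd0 htdmono htdn y δ S hS Sd hSd0 hjump hprop M D hSM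
end

section
/- If x ↦ g(f·e^{x + v²/2} − K) is μ-integrable, then x ↦ g(f·e^{x − v²/2} − K)·e^{x − v²/2} is μ-integrable and ∫ g(f·e^{x − v²/2} − K)·e^{x − v²/2} dμ(x) = ∫ g(f·e^{x + v²/2} − K) dμ(x). (This is the change-of-measure identity E[g(F_T − K)·M_T] = E[g(F_T·e^{∫_0^T σ_s² ds} − K)] for the lognormal martingale M_T = e^{∫_0^T σ dW − ½∫_0^T σ² ds} and F_T = f·M_T.) -/
open MeasureTheory ProbabilityTheory Real

lemma gauss_tilt (v2 : NNReal) (hv : v2 ≠ 0) :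
    (gaussianReal 0 v2).withDensity
        (fun x => ENNReal.ofReal (Real.exp (x - (v2 : ℝ) / 2)))
      = gaussianReal (v2 : ℝ) v2 := by
  rw [gaussianReal_of_var_ne_zero _ hv, gaussianReal_of_var_ne_zero _ hv,
    ← withDensity_mul _ (measurable_gaussianPDF _ _) (by measurability)]
  congr 1
  funext x
  have hv' : (v2 : ℝ) ≠ 0 := by exact_mod_cast hv
  simp only [Pi.mul_apply, gaussianPDF, ← ENNReal.ofReal_mul (gaussianPDFReal_nonneg _ _ _)]
  congr 1
  simp only [gaussianPDFReal, mul_assoc, ← Real.exp_add]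
  congr 2
  field_simp
  ring

/-- Change-of-measure identity under the Gaussian measure with mean `0` and
variance `v²`: if `x ↦ g(f·e^{x + v²/2} − K)` is `μ`-integrable, then
`x ↦ g(f·e^{x − v²/2} − K)·e^{x − v²/2}` is `μ`-integrable and the two integrals coincide.
(This is `E[g(F_T − K)·M_T] = E[g(F_T·e^{∫_0^T σ² ds} − K)]` for the lognormal martingale
`M_T` and `F_T = f·M_T`.) -/
theorem statement3 (v2 : NNReal) (g : ℝ → ℝ) (hg : Measurable g) (f K : ℝ)
    (hInt : Integrable (fun x : ℝ => g (f * Real.exp (x + (v2 : ℝ) / 2) - K))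
      (gaussianReal 0 v2)) :
    Integrable
        (fun x : ℝ => g (f * Real.exp (x - (v2 : ℝ) / 2) - K) * Real.exp (x - (v2 : ℝ) / 2))
        (gaussianReal 0 v2) ∧
      ∫ x : ℝ, g (f * Real.exp (x - (v2 : ℝ) / 2) - K) * Real.exp (x - (v2 : ℝ) / 2)
          ∂(gaussianReal 0 v2)
        = ∫ x : ℝ, g (f * Real.exp (x + (v2 : ℝ) / 2) - K) ∂(gaussianReal 0 v2) := by
  by_cases hv : v2 = 0
  · subst hv
    simp only [NNReal.coe_zero, zero_div, sub_zero, add_zero, gaussianReal_zero_var]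
    exact ⟨(integrable_const _).congr (ae_eq_dirac _).symm, by simp [integral_dirac]⟩
  · set h : ℝ → ℝ := fun x => g (f * Real.exp (x - (v2 : ℝ) / 2) - K) with hh
    have hmh : Measurable h := hg.comp (by measurability)
    have harg : ∀ x : ℝ, x + (v2 : ℝ) - (v2 : ℝ) / 2 = x + (v2 : ℝ) / 2 := fun x => by ring
    have hmap : gaussianReal (v2 : ℝ) v2 = (gaussianReal 0 v2).map (· + (v2 : ℝ)) := by
      rw [gaussianReal_map_add_const]; simp
    have hInt' : Integrable h (gaussianReal (v2 : ℝ) v2) := by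
      rw [hmap, integrable_map_measure hmh.aestronglyMeasurable (by fun_prop)]
      have heq : ((fun x => g (f * Real.exp (x - (v2 : ℝ) / 2) - K)) ∘ fun x => x + (v2 : ℝ))
          = fun x : ℝ => g (f * Real.exp (x + (v2 : ℝ) / 2) - K) := by
        funext x; simp only [Function.comp_apply]; rw [harg x]
      rw [hh, heq]; exact hInt
    set ρ : ℝ → NNReal := fun x => (Real.exp (x - (v2 : ℝ) / 2)).toNNReal with hρdef
    have hρ : Measurable ρ := by measurability
    have hcoe : (fun x => (ρ x : ENNReal)) = fun x => ENNReal.ofReal (Real.exp (x - (v2 : ℝ) / 2)) :=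
      rfl
    have hwd : (gaussianReal 0 v2).withDensity (fun x => (ρ x : ENNReal))
        = gaussianReal (v2 : ℝ) v2 := by rw [hcoe]; exact gauss_tilt v2 hv
    have hsmul : ∀ x : ℝ, ρ x • h x = h x * Real.exp (x - (v2 : ℝ) / 2) := by
      intro x
      simp [hρdef, NNReal.smul_def, Real.coe_toNNReal _ (Real.exp_nonneg _), mul_comm]
    have hIntS : Integrable (fun x => ρ x • h x) (gaussianReal 0 v2) := by
      rw [← integrable_withDensity_iff_integrable_smul hρ, hwd]
      exact hInt'
    refine ⟨hIntS.congr (ae_of_all _ fun x => (hsmul x)), ?_⟩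
    have : ∫ x, h x * Real.exp (x - (v2 : ℝ) / 2) ∂(gaussianReal 0 v2)
        = ∫ x, ρ x • h x ∂(gaussianReal 0 v2) := by
      exact integral_congr_ae (ae_of_all _ fun x => (hsmul x).symm)
    rw [show (fun x : ℝ => g (f * Real.exp (x - (v2 : ℝ) / 2) - K) * Real.exp (x - (v2 : ℝ) / 2))
        = fun x => h x * Real.exp (x - (v2 : ℝ) / 2) from rfl, this,
      ← integral_withDensity_eq_integral_smul hρ, hwd, hmap,
      integral_map (by fun_prop) hmh.aestronglyMeasurable]
    simp [hh, harg]
end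

section
/- If g(f·e^{X + Y + b − (a+b)/2} − K) is integrable, then g(f·e^{X + Y − (a+b)/2} − K)·e^{Y − b/2} is integrable and E[g(f·e^{X + Y − (a+b)/2} − K)·e^{Y − b/2}] = E[g(f·e^{X + Y + b − (a+b)/2} − K)]. (With a = ∫_0^{t_i} σ_s² ds and b = ∫_{t_i}^{T} σ_s² ds, this is the change-of-measure identity E[g(F_T − K)·M_T/M_{t_i}] = E[g(F_T·e^{∫_{t_i}^{T} σ_s² ds} − K)].) -/
open MeasureTheory ProbabilityTheory Real
open scoped ENNReal NNReal

/-! Cameron–Martin for a one-dimensional Gaussian: weighting `N(m, v)` by the density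
`exp (y - m - v/2)` gives `N(m + v, v)`, its translate by `v`. If `Y ∼ N(m, v)` is independent
of `X`, the joint law of `(X, Y)` is a product and the reweighting acts on the second factor only,
so `E[φ(X, Y) e^{Y - m - v/2}] = E[φ(X, Y + v)]` for every measurable `φ`, with integrability of
either side equivalent to that of the other. -/

lemma gaussianReal_withDensity_exp (m : ℝ) (v : ℝ≥0) :
    (gaussianReal m v).withDensity (fun y => ENNReal.ofReal (exp (y - m - v / 2)))
      = gaussianReal (m + v) v := by
  by_cases hv : v = 0
  · subst hv
    simp [gaussianReal_zero_var, dirac_withDensity]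
  rw [gaussianReal_of_var_ne_zero _ hv, gaussianReal_of_var_ne_zero _ hv,
    ← withDensity_mul _ (measurable_gaussianPDF m v) (by fun_prop)]
  congr 1
  funext y
  simp only [gaussianPDF, Pi.mul_apply, gaussianPDFReal]
  rw [← ENNReal.ofReal_mul (by positivity), mul_assoc, ← exp_add]
  congr 3
  have : (v : ℝ) ≠ 0 := NNReal.coe_ne_zero.mpr hv
  field_simp
  ring

section Product

variable {α : Type*} [MeasurableSpace α] (ν : Measure α) [SFinite ν] (m : ℝ) (v : ℝ≥0)

lemma prod_gaussianReal_withDensity_exp :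
    (ν.prod (gaussianReal m v)).withDensity (fun p => ENNReal.ofReal (exp (p.2 - m - v / 2)))
      = (ν.prod (gaussianReal m v)).map (fun p => (p.1, p.2 + (v : ℝ))) := by
  rw [← prod_withDensity_right (g := fun y => ENNReal.ofReal (exp (y - m - v / 2))) (by fun_prop),
    gaussianReal_withDensity_exp, ← gaussianReal_map_add_const, ← Measure.map_id (μ := ν),
    Measure.map_prod_map _ _ measurable_id (measurable_add_const _), Measure.map_id]
  rfl

variable {ν m v} {φ : α × ℝ → ℝ}

lemma integrable_mul_exp_prod_gaussianReal_iff (hφ : Measurable φ) :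
    Integrable (fun p => φ p * exp (p.2 - m - v / 2)) (ν.prod (gaussianReal m v))
      ↔ Integrable (fun p => φ (p.1, p.2 + (v : ℝ))) (ν.prod (gaussianReal m v)) := by
  have h := integrable_withDensity_iff (g := φ) (μ := ν.prod (gaussianReal m v))
    (by fun_prop) (.of_forall fun p => ENNReal.ofReal_lt_top (r := exp (p.2 - m - v / 2)))
  simp only [ENNReal.toReal_ofReal (exp_nonneg _)] at h
  rw [← h, prod_gaussianReal_withDensity_exp,
    integrable_map_measure hφ.aestronglyMeasurable (by fun_prop)]
  rfl

lemma integral_mul_exp_prod_gaussianReal (hφ : Measurable φ) :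
    ∫ p, φ p * exp (p.2 - m - v / 2) ∂(ν.prod (gaussianReal m v))
      = ∫ p, φ (p.1, p.2 + (v : ℝ)) ∂(ν.prod (gaussianReal m v)) := by
  rw [← integral_map (by fun_prop) hφ.aestronglyMeasurable,
    ← prod_gaussianReal_withDensity_exp,
    integral_withDensity_eq_integral_toReal_smul (by fun_prop)
      (.of_forall fun _ => ENNReal.ofReal_lt_top)]
  simp only [ENNReal.toReal_ofReal (exp_nonneg _), smul_eq_mul, mul_comm]

end Product

namespace ProbabilityTheory.IndepFun

variable {Ω α : Type*} [MeasurableSpace Ω] [MeasurableSpace α] {P : Measure Ω} [IsFiniteMeasure P]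
  {X : Ω → α} {Y : Ω → ℝ} {m : ℝ} {v : ℝ≥0} {φ : α × ℝ → ℝ}

lemma integrable_mul_exp_iff_of_map_eq_gaussianReal (hXY : IndepFun X Y P) (hX : Measurable X)
    (hY : Measurable Y) (hYlaw : P.map Y = gaussianReal m v) (hφ : Measurable φ) :
    Integrable (fun ω => φ (X ω, Y ω) * exp (Y ω - m - v / 2)) P
      ↔ Integrable (fun ω => φ (X ω, Y ω + v)) P := by
  have key := integrable_mul_exp_prod_gaussianReal_iff (ν := P.map X) (m := m) (v := v) hφ
  rw [← hYlaw, ← hXY.map_prod_eq_prod_map_map hX.aemeasurable hY.aemeasurable,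
    integrable_map_measure (by fun_prop) (by fun_prop),
    integrable_map_measure (g := fun p : α × ℝ => φ (p.1, p.2 + v))
      (hφ.comp (by fun_prop)).aestronglyMeasurable (by fun_prop)] at key
  exact key

lemma integral_mul_exp_of_map_eq_gaussianReal (hXY : IndepFun X Y P) (hX : Measurable X)
    (hY : Measurable Y) (hYlaw : P.map Y = gaussianReal m v) (hφ : Measurable φ) :
    ∫ ω, φ (X ω, Y ω) * exp (Y ω - m - v / 2) ∂P = ∫ ω, φ (X ω, Y ω + v) ∂P := by
  have key := integral_mul_exp_prod_gaussianReal (ν := P.map X) (m := m) (v := v) hφ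
  rw [← hYlaw, ← hXY.map_prod_eq_prod_map_map hX.aemeasurable hY.aemeasurable,
    integral_map (by fun_prop) (by fun_prop),
    integral_map (f := fun p : α × ℝ => φ (p.1, p.2 + v)) (by fun_prop)
      (hφ.comp (by fun_prop)).aestronglyMeasurable] at key
  exact key

end ProbabilityTheory.IndepFun

theorem statement4_general {Ω : Type*} [MeasurableSpace Ω] (P : Measure Ω) [IsProbabilityMeasure P]
    (a b : ℝ) (hb : 0 ≤ b)
    (X Y : Ω → ℝ) (hX : Measurable X) (hY : Measurable Y)
    (hindep : IndepFun X Y P)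
    (hYlaw : Measure.map Y P = gaussianReal 0 b.toNNReal)
    (g : ℝ → ℝ) (hg : Measurable g) (f K : ℝ)
    (hInt : Integrable (fun ω => g (f * Real.exp (X ω + Y ω + b - (a + b) / 2) - K)) P) :
    Integrable
        (fun ω => g (f * Real.exp (X ω + Y ω - (a + b) / 2) - K) * Real.exp (Y ω - b / 2)) P ∧
      ∫ ω, g (f * Real.exp (X ω + Y ω - (a + b) / 2) - K) * Real.exp (Y ω - b / 2) ∂P
        = ∫ ω, g (f * Real.exp (X ω + Y ω + b - (a + b) / 2) - K) ∂P := by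
  set φ : ℝ × ℝ → ℝ := fun p => g (f * exp (p.1 + p.2 - (a + b) / 2) - K)
  have hφ : Measurable φ := hg.comp (by fun_prop)
  have hb_coe : ((b.toNNReal : ℝ≥0) : ℝ) = b := coe_toNNReal b hb
  have hint_iff := hindep.integrable_mul_exp_iff_of_map_eq_gaussianReal hX hY hYlaw hφ
  have hintegral := hindep.integral_mul_exp_of_map_eq_gaussianReal hX hY hYlaw hφ
  simp only [φ, hb_coe, sub_zero, ← add_assoc] at hint_iff hintegral
  exact ⟨hint_iff.mpr hInt, hintegral⟩

/-- If `g(f·e^{X + Y + b − (a+b)/2} − K)` is integrable, then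
`g(f·e^{X + Y − (a+b)/2} − K)·e^{Y − b/2}` is integrable and
`E[g(f·e^{X + Y − (a+b)/2} − K)·e^{Y − b/2}] = E[g(f·e^{X + Y + b − (a+b)/2} − K)]`,
for independent centered Gaussian `X`, `Y` with variances `a`, `b`.
(This is `E[g(F_T − K)·M_T/M_{t_i}] = E[g(F_T·e^{∫_{t_i}^{T} σ² ds} − K)]`.) -/
theorem statement4 {Ω : Type*} [MeasurableSpace Ω] (P : Measure Ω) [IsProbabilityMeasure P]
    (a b : ℝ) (ha : 0 ≤ a) (hb : 0 ≤ b)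
    (X Y : Ω → ℝ) (hX : Measurable X) (hY : Measurable Y)
    (hindep : IndepFun X Y P)
    (hXlaw : Measure.map X P = gaussianReal 0 a.toNNReal)
    (hYlaw : Measure.map Y P = gaussianReal 0 b.toNNReal)
    (g : ℝ → ℝ) (hg : Measurable g) (f K : ℝ)
    (hInt : Integrable (fun ω => g (f * Real.exp (X ω + Y ω + b - (a + b) / 2) - K)) P) :
    Integrable
        (fun ω => g (f * Real.exp (X ω + Y ω - (a + b) / 2) - K) * Real.exp (Y ω - b / 2)) P ∧
      ∫ ω, g (f * Real.exp (X ω + Y ω - (a + b) / 2) - K) * Real.exp (Y ω - b / 2) ∂P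
        = ∫ ω, g (f * Real.exp (X ω + Y ω + b - (a + b) / 2) - K) ∂P :=
  statement4_general P a b hb X Y hX hY hindep hYlaw g hg f K hInt
end

section
/- If g(c·M·e^{(β+γ)+γ}) is integrable, then g(c·M)·R_1·R_2 is integrable and E[g(c·M)·R_1·R_2] = E[g(c·M·e^{(β+γ)+γ})]·e^{γ}. (That is, E[g(F_T)·(M_T/M_{t_i})·(M_T/M_{t_j})] = E[g(F_T·e^{∫_{t_i}^{T}σ² + ∫_{t_j}^{T}σ²})]·e^{∫_{max(t_i,t_j)}^{T} σ²} for dividend dates t_i ≤ t_j.) -/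
/-!
Since `R₁ R₂ = e^γ · e^{Y - β/2} e^{2Z - 2γ}`, the claim is a Cameron–Martin change of measure:
tilting `N(0, v)` by `e^{a x - a² v / 2}` gives `N(a v, v)`, so on the product law of `(X, Y, Z)`
the density `e^{Y - β/2} e^{2Z - 2γ}` amounts to shifting `(X, Y, Z)` by `(0, β, 2γ)`, which
multiplies `M` by `e^{β + 2γ}`.
-/

open MeasureTheory ProbabilityTheory Real
open scoped ENNReal NNReal

lemma gaussianReal_withDensity_exp_eq_map_add (m : ℝ) (v : ℝ≥0) (a : ℝ) :
    (gaussianReal m v).withDensity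
        (fun x => ENNReal.ofReal (exp (a * (x - m) - a ^ 2 * v / 2)))
      = (gaussianReal m v).map (· + a * v) := by
  rw [gaussianReal_map_add_const]
  obtain rfl | hv := eq_or_ne v 0
  · simp [gaussianReal_zero_var, dirac_withDensity]
  rw [gaussianReal_of_var_ne_zero _ hv, gaussianReal_of_var_ne_zero _ hv,
    ← withDensity_mul _ (measurable_gaussianPDF _ _) (by fun_prop)]
  congr 1
  ext x
  rw [Pi.mul_apply, gaussianPDF_def, gaussianPDF_def,
    ← ENNReal.ofReal_mul (gaussianPDFReal_nonneg m v x)]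
  simp only [gaussianPDFReal]
  rw [mul_assoc, ← exp_add]
  have hv' : (v : ℝ) ≠ 0 := by exact_mod_cast hv
  congr 3
  field_simp
  ring

lemma withDensity_prod_eq_map_prodMap {A B : Type*} [MeasurableSpace A] [MeasurableSpace B]
    {μ : Measure A} {ν : Measure B} [SFinite μ] [SFinite ν] {f : A → ℝ} {g : B → ℝ}
    (hf : Measurable f) (hg : Measurable g) (hf₀ : ∀ x, 0 ≤ f x)
    {φ : A → A} {ψ : B → B} (hφ : Measurable φ) (hψ : Measurable ψ)
    (hfφ : μ.withDensity (fun x => ENNReal.ofReal (f x)) = μ.map φ)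
    (hgψ : ν.withDensity (fun y => ENNReal.ofReal (g y)) = ν.map ψ) :
    (μ.prod ν).withDensity (fun p => ENNReal.ofReal (f p.1 * g p.2))
      = (μ.prod ν).map (Prod.map φ ψ) := by
  simp_rw [ENNReal.ofReal_mul (hf₀ _)]
  rw [← Measure.map_prod_map _ _ hφ hψ, ← hfφ, ← hgψ,
    prod_withDensity (by fun_prop) (by fun_prop)]

lemma gaussianReal_prod_withDensity_exp_eq_map_add (u v w : ℝ≥0) (b c : ℝ) :
    ((gaussianReal 0 u).prod ((gaussianReal 0 v).prod (gaussianReal 0 w))).withDensity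
        (fun p => ENNReal.ofReal (exp (b * p.2.1 + c * p.2.2 - (b ^ 2 * v + c ^ 2 * w) / 2)))
      = ((gaussianReal 0 u).prod ((gaussianReal 0 v).prod (gaussianReal 0 w))).map
          (fun p => (p.1, p.2.1 + b * v, p.2.2 + c * w)) := by
  have hu : (gaussianReal 0 u).withDensity (fun _ => ENNReal.ofReal 1)
      = (gaussianReal 0 u).map id := by simp
  have hvw := withDensity_prod_eq_map_prodMap (by fun_prop) (by fun_prop) (fun _ => (exp_pos _).le)
    (by fun_prop) (by fun_prop) (gaussianReal_withDensity_exp_eq_map_add 0 v b)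
    (gaussianReal_withDensity_exp_eq_map_add 0 w c)
  convert withDensity_prod_eq_map_prodMap measurable_const (by fun_prop) (fun _ => zero_le_one)
    measurable_id (by fun_prop) hu hvw using 3 with p
  · rw [one_mul, ← exp_add]
    ring_nf
  · rfl

lemma integrable_and_integral_mul_eq_of_withDensity_eq_map {Ω E : Type*} [MeasurableSpace Ω]
    [MeasurableSpace E] {P : Measure Ω} {T : Ω → E} (hT : AEMeasurable T P)
    {ρ : E → ℝ} (hρ : Measurable ρ) (hρ₀ : ∀ x, 0 ≤ ρ x) {φ : E → E} (hφ : Measurable φ)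
    (hρφ : (P.map T).withDensity (fun x => ENNReal.ofReal (ρ x)) = (P.map T).map φ)
    {H : E → ℝ} (hH : Measurable H) (hint : Integrable (fun ω => H (φ (T ω))) P) :
    Integrable (fun ω => ρ (T ω) * H (T ω)) P
      ∧ ∫ ω, ρ (T ω) * H (T ω) ∂P = ∫ ω, H (φ (T ω)) ∂P := by
  have hρH : Measurable fun x => ρ x * H x := hρ.mul hH
  have hdens : ∀ x, (ENNReal.ofReal (ρ x)).toReal • H x = ρ x * H x := fun x => by
    rw [ENNReal.toReal_ofReal (hρ₀ x), smul_eq_mul]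
  have hfin : ∀ᵐ x ∂(P.map T), ENNReal.ofReal (ρ x) < ∞ :=
    ae_of_all _ fun _ => ENNReal.ofReal_lt_top
  have hHφ : Integrable H ((P.map T).map φ) := by
    rw [integrable_map_measure hH.aestronglyMeasurable hφ.aemeasurable,
      integrable_map_measure (hH.comp hφ).aestronglyMeasurable hT]
    exact hint
  rw [← hρφ, integrable_withDensity_iff_integrable_smul' (by fun_prop) hfin] at hHφ
  simp only [hdens] at hHφ
  refine ⟨(integrable_map_measure hρH.aestronglyMeasurable hT).1 hHφ, ?_⟩
  calc ∫ ω, ρ (T ω) * H (T ω) ∂P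
      = ∫ x, ρ x * H x ∂(P.map T) := (integral_map hT hρH.aestronglyMeasurable).symm
    _ = ∫ x, H x ∂((P.map T).withDensity fun x => ENNReal.ofReal (ρ x)) := by
        rw [integral_withDensity_eq_integral_toReal_smul (by fun_prop) hfin]
        simp only [hdens]
    _ = ∫ ω, H (φ (T ω)) ∂P := by
        rw [hρφ, integral_map hφ.aemeasurable hH.aestronglyMeasurable]
        exact integral_map hT (hH.comp hφ).aestronglyMeasurable

lemma ProbabilityTheory.iIndepFun.map_triple_eq_prod {Ω β : Type*} [MeasurableSpace Ω]
    [MeasurableSpace β] {P : Measure Ω} [IsFiniteMeasure P] {X Y Z : Ω → β}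
    (h : iIndepFun ![X, Y, Z] P) (hX : Measurable X) (hY : Measurable Y) (hZ : Measurable Z) :
    P.map (fun ω => (X ω, Y ω, Z ω)) = (P.map X).prod ((P.map Y).prod (P.map Z)) := by
  have hm : ∀ i, Measurable (![X, Y, Z] i) := fun i => by fin_cases i <;> assumption
  have hYZ : P.map (fun ω => (Y ω, Z ω)) = (P.map Y).prod (P.map Z) :=
    (indepFun_iff_map_prod_eq_prod_map_map hY.aemeasurable hZ.aemeasurable).1
      (h.indepFun (show (1 : Fin 3) ≠ 2 by decide))
  rw [← hYZ]
  exact (indepFun_iff_map_prod_eq_prod_map_map hX.aemeasurable (hY.prodMk hZ).aemeasurable).1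
    (h.indepFun_prodMk hm 1 2 0 (by decide) (by decide)).symm

theorem statement5_general {Ω : Type*} [MeasurableSpace Ω] (P : Measure Ω) [IsProbabilityMeasure P]
    (α β γ : ℝ) (hβ : 0 ≤ β) (hγ : 0 ≤ γ)
    (X Y Z : Ω → ℝ) (hX : Measurable X) (hY : Measurable Y) (hZ : Measurable Z)
    (hindep : iIndepFun ![X, Y, Z] P)
    (hXlaw : Measure.map X P = gaussianReal 0 α.toNNReal)
    (hYlaw : Measure.map Y P = gaussianReal 0 β.toNNReal)
    (hZlaw : Measure.map Z P = gaussianReal 0 γ.toNNReal)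
    (g : ℝ → ℝ) (hg : Measurable g) (c : ℝ)
    (hInt : Integrable
      (fun ω => g (c * Real.exp (X ω + Y ω + Z ω - (α + β + γ) / 2)
        * Real.exp ((β + γ) + γ))) P) :
    Integrable
        (fun ω => g (c * Real.exp (X ω + Y ω + Z ω - (α + β + γ) / 2))
          * Real.exp (Y ω + Z ω - (β + γ) / 2) * Real.exp (Z ω - γ / 2)) P ∧
      ∫ ω, g (c * Real.exp (X ω + Y ω + Z ω - (α + β + γ) / 2))
          * Real.exp (Y ω + Z ω - (β + γ) / 2) * Real.exp (Z ω - γ / 2) ∂P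
        = (∫ ω, g (c * Real.exp (X ω + Y ω + Z ω - (α + β + γ) / 2)
            * Real.exp ((β + γ) + γ)) ∂P) * Real.exp γ := by
  have hlaw : P.map (fun ω => (X ω, Y ω, Z ω)) = (gaussianReal 0 α.toNNReal).prod
      ((gaussianReal 0 β.toNNReal).prod (gaussianReal 0 γ.toNNReal)) := by
    rw [hindep.map_triple_eq_prod hX hY hZ, hXlaw, hYlaw, hZlaw]
  have htilt := gaussianReal_prod_withDensity_exp_eq_map_add α.toNNReal β.toNNReal γ.toNNReal 1 2
  rw [← hlaw, Real.coe_toNNReal β hβ, Real.coe_toNNReal γ hγ] at htilt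
  have hshift : ∀ ω, g (c * exp (X ω + Y ω + Z ω - (α + β + γ) / 2) * exp ((β + γ) + γ))
      = g (c * exp (X ω + (Y ω + 1 * β) + (Z ω + 2 * γ) - (α + β + γ) / 2)) := fun ω => by
    rw [mul_assoc, ← exp_add]
    ring_nf
  have hdensity : ∀ ω, g (c * exp (X ω + Y ω + Z ω - (α + β + γ) / 2))
        * exp (Y ω + Z ω - (β + γ) / 2) * exp (Z ω - γ / 2)
      = exp γ * (exp (1 * Y ω + 2 * Z ω - (1 ^ 2 * β + 2 ^ 2 * γ) / 2)
        * g (c * exp (X ω + Y ω + Z ω - (α + β + γ) / 2))) := fun ω => by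
    rw [mul_assoc, ← exp_add, mul_comm, ← mul_assoc, ← exp_add]
    congr 2
    ring
  simp only [hshift] at hInt
  obtain ⟨hint, heq⟩ := integrable_and_integral_mul_eq_of_withDensity_eq_map
    (hX.prodMk (hY.prodMk hZ)).aemeasurable (by fun_prop) (fun _ => (exp_pos _).le) (by fun_prop)
    htilt (H := fun p => g (c * exp (p.1 + p.2.1 + p.2.2 - (α + β + γ) / 2)))
    (hg.comp (by fun_prop)) hInt
  simp only [hdensity, hshift]
  exact ⟨hint.const_mul _, by rw [integral_const_mul, heq, mul_comm]⟩

/-- With `M = e^{X+Y+Z−(α+β+γ)/2}`, `R₁ = e^{Y+Z−(β+γ)/2}`,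
`R₂ = e^{Z−γ/2}` for independent centered Gaussians `X, Y, Z` of variances `α, β, γ`:
if `g(c·M·e^{(β+γ)+γ})` is integrable, then `g(c·M)·R₁·R₂` is integrable and
`E[g(c·M)·R₁·R₂] = E[g(c·M·e^{(β+γ)+γ})]·e^{γ}`.
(That is, `E[g(F_T)·(M_T/M_{t_i})·(M_T/M_{t_j})]
  = E[g(F_T·e^{∫_{t_i}^{T}σ² + ∫_{t_j}^{T}σ²})]·e^{∫_{max(t_i,t_j)}^{T} σ²}` for `t_i ≤ t_j`.) -/
theorem statement5 {Ω : Type*} [MeasurableSpace Ω] (P : Measure Ω) [IsProbabilityMeasure P]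
    (α β γ : ℝ) (hα : 0 ≤ α) (hβ : 0 ≤ β) (hγ : 0 ≤ γ)
    (X Y Z : Ω → ℝ) (hX : Measurable X) (hY : Measurable Y) (hZ : Measurable Z)
    (hindep : iIndepFun ![X, Y, Z] P)
    (hXlaw : Measure.map X P = gaussianReal 0 α.toNNReal)
    (hYlaw : Measure.map Y P = gaussianReal 0 β.toNNReal)
    (hZlaw : Measure.map Z P = gaussianReal 0 γ.toNNReal)
    (g : ℝ → ℝ) (hg : Measurable g) (c : ℝ)
    (hInt : Integrable
      (fun ω => g (c * Real.exp (X ω + Y ω + Z ω - (α + β + γ) / 2)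
        * Real.exp ((β + γ) + γ))) P) :
    Integrable
        (fun ω => g (c * Real.exp (X ω + Y ω + Z ω - (α + β + γ) / 2))
          * Real.exp (Y ω + Z ω - (β + γ) / 2) * Real.exp (Z ω - γ / 2)) P ∧
      ∫ ω, g (c * Real.exp (X ω + Y ω + Z ω - (α + β + γ) / 2))
          * Real.exp (Y ω + Z ω - (β + γ) / 2) * Real.exp (Z ω - γ / 2) ∂P
        = (∫ ω, g (c * Real.exp (X ω + Y ω + Z ω - (α + β + γ) / 2)
            * Real.exp ((β + γ) + γ)) ∂P) * Real.exp γ :=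
  statement5_general P α β γ hβ hγ X Y Z hX hY hZ hindep hXlaw hYlaw hZlaw g hg c hInt
end

section
/- If g(c·M·e^{(β+γ+ρ)+(γ+ρ)+ρ}) is integrable, then g(c·M)·R_1·R_2·R_3 is integrable and E[g(c·M)·R_1·R_2·R_3] = E[g(c·M·e^{(β+γ+ρ)+(γ+ρ)+ρ})]·e^{(γ+ρ)+2ρ}. (That is, E[g(F_T)·(M_T/M_{t_i})·(M_T/M_{t_j})·(M_T/M_{t_l})] = E[g(F_T·e^{∫_{t_i}^{T}σ² + ∫_{t_j}^{T}σ² + ∫_{t_l}^{T}σ²})]·e^{∫_{max(t_i,t_j)}^{T}σ² + ∫_{max(t_i,t_l)}^{T}σ² + ∫_{max(t_j,t_l)}^{T}σ²} for dividend dates t_i ≤ t_j ≤ t_l.) -/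
/-!
Cameron–Martin for independent Gaussians: tilting the law of independent `Vᵢ ~ N(μᵢ, vᵢ)` by
`exp (∑ kᵢ Vᵢ)` shifts each coordinate by `vᵢ kᵢ`, at the cost of the factor
`E[exp (∑ kᵢ Vᵢ)] = exp (∑ (μᵢ kᵢ + vᵢ kᵢ² / 2))`. Up to a constant, `R₁ R₂ R₃ = exp (Y + 2Z + 3U)`,
so the tilt with `k = (0, 1, 2, 3)` moves `X + Y + Z + U` by `β + 2γ + 3ρ = (β+γ+ρ) + (γ+ρ) + ρ`,
and the constants combine to `e^{(γ+ρ)+2ρ}`.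
-/

open MeasureTheory ProbabilityTheory Real
open scoped NNReal

lemma Set.indicator_univ_pi_prod {ι M : Type*} [Fintype ι] [CommMonoidWithZero M] {α : ι → Type*}
    (s : ∀ i, Set (α i)) (h : ∀ i, α i → M) (x : ∀ i, α i) :
    (Set.univ.pi s).indicator (fun x => ∏ i, h i (x i)) x = ∏ i, (s i).indicator (h i) (x i) := by
  by_cases hx : x ∈ Set.univ.pi s
  · rw [Set.indicator_of_mem hx]
    exact Finset.prod_congr rfl fun i _ => (Set.indicator_of_mem (hx i trivial) _).symm
  · obtain ⟨i, hi⟩ : ∃ i, x i ∉ s i := by simpa using hx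
    rw [Set.indicator_of_notMem hx, eq_comm]
    exact Finset.prod_eq_zero (Finset.mem_univ i) (Set.indicator_of_notMem hi _)

lemma MeasureTheory.Measure.pi_tilted {ι : Type*} [Fintype ι] {α : ι → Type*}
    [∀ i, MeasurableSpace (α i)] (μ : ∀ i, Measure (α i)) [∀ i, IsProbabilityMeasure (μ i)]
    {f : ∀ i, α i → ℝ} (hf : ∀ i, Integrable (fun x => exp (f i x)) (μ i)) :
    (Measure.pi μ).tilted (fun x => ∑ i, f i (x i)) = Measure.pi fun i => (μ i).tilted (f i) := by
  have := fun i => isProbabilityMeasure_tilted (hf i)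
  refine (Measure.pi_eq fun s hs => ?_).symm
  have hZ : ∫ x, exp (∑ i, f i (x i)) ∂Measure.pi μ = ∏ i, ∫ y, exp (f i y) ∂μ i := by
    simp_rw [exp_sum]
    exact integral_fintype_prod_eq_prod (fun i y => exp (f i y))
  simp_rw [tilted_apply_eq_ofReal_integral' _ (MeasurableSet.univ_pi hs),
    tilted_apply_eq_ofReal_integral' _ (hs _)]
  rw [← ENNReal.ofReal_prod_of_nonneg fun i _ => setIntegral_nonneg (hs i) fun y _ => by positivity]
  congr 1
  rw [hZ, ← integral_indicator (MeasurableSet.univ_pi hs)]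
  simp_rw [exp_sum, ← Finset.prod_div_distrib]
  rw [funext (Set.indicator_univ_pi_prod s fun i y => exp (f i y) / ∫ y, exp (f i y) ∂μ i)]
  exact (integral_fintype_prod_eq_prod _).trans
    (Finset.prod_congr rfl fun i _ => integral_indicator (hs i))

namespace ProbabilityTheory

lemma integral_exp_mul_gaussianReal (μ : ℝ) (v : ℝ≥0) (k : ℝ) :
    ∫ x, exp (k * x) ∂gaussianReal μ v = exp (μ * k + v * k ^ 2 / 2) :=
  congrFun mgf_fun_id_gaussianReal k

lemma gaussianReal_tilted_mul (μ : ℝ) (v : ℝ≥0) (k : ℝ) :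
    (gaussianReal μ v).tilted (k * ·) = gaussianReal (μ + v * k) v := by
  by_cases hv : v = 0
  · subst hv
    simp [Measure.tilted, gaussianReal_zero_var, dirac_withDensity]
  rw [Measure.tilted, integral_exp_mul_gaussianReal, gaussianReal_of_var_ne_zero _ hv,
    gaussianReal_of_var_ne_zero _ hv, ← withDensity_mul _ (measurable_gaussianPDF _ _)
      (by fun_prop)]
  congr 1
  funext x
  simp only [Pi.mul_apply, gaussianPDF_def]
  rw [← ENNReal.ofReal_mul (gaussianPDFReal_nonneg _ _ _), gaussianPDFReal, gaussianPDFReal,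
    mul_assoc, mul_div_assoc, ← exp_sub, ← exp_add]
  have hv' : (v : ℝ) ≠ 0 := by exact_mod_cast hv
  congr 3
  field_simp
  ring

lemma pi_gaussianReal_tilted {ι : Type*} [Fintype ι] (μ : ι → ℝ) (v : ι → ℝ≥0) (k : ι → ℝ) :
    (Measure.pi fun i => gaussianReal (μ i) (v i)).tilted (fun x => ∑ i, k i * x i)
      = (Measure.pi fun i => gaussianReal (μ i) (v i)).map (fun x i => x i + v i * k i) := by
  rw [Measure.pi_tilted _ fun i => integrable_exp_mul_gaussianReal (k i),
    Measure.pi_map_pi (f := fun i y => y + v i * k i) fun i => by fun_prop]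
  simp_rw [gaussianReal_tilted_mul, gaussianReal_map_add_const]

lemma integral_exp_sum_mul_pi_gaussianReal {ι : Type*} [Fintype ι] (μ : ι → ℝ) (v : ι → ℝ≥0)
    (k : ι → ℝ) :
    ∫ x, exp (∑ i, k i * x i) ∂(Measure.pi fun i => gaussianReal (μ i) (v i))
      = exp (∑ i, (μ i * k i + v i * k i ^ 2 / 2)) := by
  simp_rw [exp_sum]
  rw [integral_fintype_prod_eq_prod (fun i y => exp (k i * y))]
  simp_rw [integral_exp_mul_gaussianReal]

lemma integrable_exp_sum_mul_pi_gaussianReal {ι : Type*} [Fintype ι] (μ : ι → ℝ) (v : ι → ℝ≥0)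
    (k : ι → ℝ) :
    Integrable (fun x => exp (∑ i, k i * x i)) (Measure.pi fun i => gaussianReal (μ i) (v i)) := by
  simp_rw [exp_sum]
  exact Integrable.fintype_prod_dep fun i => integrable_exp_mul_gaussianReal (k i)

section CameronMartin

variable {Ω ι : Type*} [MeasurableSpace Ω] {P : Measure Ω} [IsProbabilityMeasure P] [Fintype ι]
  {V : ι → Ω → ℝ} {μ : ι → ℝ} {v : ι → ℝ≥0} {F : (ι → ℝ) → ℝ}

lemma iIndepFun.measurePreserving_pi_gaussianReal (hV : ∀ i, Measurable (V i))
    (hindep : iIndepFun V P) (hlaw : ∀ i, P.map (V i) = gaussianReal (μ i) (v i)) :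
    MeasurePreserving (fun ω i => V i ω) P (Measure.pi fun i => gaussianReal (μ i) (v i)) := by
  refine ⟨measurable_pi_lambda _ hV, ?_⟩
  rw [(iIndepFun_iff_map_fun_eq_pi_map fun i => (hV i).aemeasurable).mp hindep]
  simp_rw [hlaw]

variable (hV : ∀ i, Measurable (V i)) (hindep : iIndepFun V P)
  (hlaw : ∀ i, P.map (V i) = gaussianReal (μ i) (v i)) (hF : Measurable F) (k : ι → ℝ)
include hV hindep hlaw hF

lemma iIndepFun.integrable_mul_exp_sum_iff :
    Integrable (fun ω => F (fun i => V i ω) * exp (∑ i, k i * V i ω)) P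
      ↔ Integrable (fun ω => F (fun i => V i ω + v i * k i)) P := by
  have hVlaw := hindep.measurePreserving_pi_gaussianReal hV hlaw
  have hshift : Measurable fun (x : ι → ℝ) i => x i + v i * k i := by fun_prop
  calc Integrable (fun ω => F (fun i => V i ω) * exp (∑ i, k i * V i ω)) P
      ↔ Integrable (fun x => exp (∑ i, k i * x i) • F x)
          (Measure.pi fun i => gaussianReal (μ i) (v i)) := by
        simp_rw [smul_eq_mul, mul_comm (exp _)]
        exact hVlaw.integrable_comp (g := fun x => F x * exp (∑ i, k i * x i)) (by fun_prop)
    _ ↔ Integrable F ((Measure.pi fun i => gaussianReal (μ i) (v i)).map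
          fun x i => x i + v i * k i) := by
        rw [← pi_gaussianReal_tilted, integrable_tilted_iff
          (integrable_exp_sum_mul_pi_gaussianReal μ v k)]
    _ ↔ _ := integrable_map_measure hF.aestronglyMeasurable hshift.aemeasurable
    _ ↔ _ := (hVlaw.integrable_comp (hF.comp hshift).aestronglyMeasurable).symm

lemma iIndepFun.integral_mul_exp_sum :
    ∫ ω, F (fun i => V i ω) * exp (∑ i, k i * V i ω) ∂P
      = exp (∑ i, (μ i * k i + v i * k i ^ 2 / 2)) * ∫ ω, F (fun i => V i ω + v i * k i) ∂P := by
  have hVlaw := hindep.measurePreserving_pi_gaussianReal hV hlaw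
  have hshift : Measurable fun (x : ι → ℝ) i => x i + v i * k i := by fun_prop
  have hZ := integrable_exp_sum_mul_pi_gaussianReal μ v k
  calc ∫ ω, F (fun i => V i ω) * exp (∑ i, k i * V i ω) ∂P
      = ∫ x, F x * exp (∑ i, k i * x i) ∂(Measure.pi fun i => gaussianReal (μ i) (v i)) := by
        rw [← hVlaw.map_eq, integral_map hVlaw.measurable.aemeasurable (by fun_prop)]
    _ = (∫ x, exp (∑ i, k i * x i) ∂(Measure.pi fun i => gaussianReal (μ i) (v i)))
          * ∫ x, F x ∂(Measure.pi fun i => gaussianReal (μ i) (v i)).tilted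
            fun x => ∑ i, k i * x i := by
        rw [integral_tilted, ← integral_const_mul]
        refine integral_congr_ae (ae_of_all _ fun x => ?_)
        have := (integral_exp_pos hZ).ne'
        simp only [smul_eq_mul]
        field_simp
    _ = _ := by
        rw [integral_exp_sum_mul_pi_gaussianReal, pi_gaussianReal_tilted,
          integral_map hshift.aemeasurable hF.aestronglyMeasurable, ← hVlaw.map_eq,
          integral_map hVlaw.measurable.aemeasurable
            (by exact (hF.comp hshift).aestronglyMeasurable)]

end CameronMartin

end ProbabilityTheory

theorem statement6_general {Ω : Type*} [MeasurableSpace Ω] (P : Measure Ω) [IsProbabilityMeasure P]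
    (α β γ ρ : ℝ) (hβ : 0 ≤ β) (hγ : 0 ≤ γ) (hρ : 0 ≤ ρ)
    (X Y Z U : Ω → ℝ) (hX : Measurable X) (hY : Measurable Y) (hZ : Measurable Z)
    (hU : Measurable U)
    (hindep : iIndepFun ![X, Y, Z, U] P)
    (hXlaw : Measure.map X P = gaussianReal 0 α.toNNReal)
    (hYlaw : Measure.map Y P = gaussianReal 0 β.toNNReal)
    (hZlaw : Measure.map Z P = gaussianReal 0 γ.toNNReal)
    (hUlaw : Measure.map U P = gaussianReal 0 ρ.toNNReal)
    (g : ℝ → ℝ) (hg : Measurable g) (c : ℝ)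
    (hInt : Integrable
      (fun ω => g (c * Real.exp (X ω + Y ω + Z ω + U ω - (α + β + γ + ρ) / 2)
        * Real.exp ((β + γ + ρ) + (γ + ρ) + ρ))) P) :
    Integrable
        (fun ω => g (c * Real.exp (X ω + Y ω + Z ω + U ω - (α + β + γ + ρ) / 2))
          * Real.exp (Y ω + Z ω + U ω - (β + γ + ρ) / 2)
          * Real.exp (Z ω + U ω - (γ + ρ) / 2) * Real.exp (U ω - ρ / 2)) P ∧
      ∫ ω, g (c * Real.exp (X ω + Y ω + Z ω + U ω - (α + β + γ + ρ) / 2))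
          * Real.exp (Y ω + Z ω + U ω - (β + γ + ρ) / 2)
          * Real.exp (Z ω + U ω - (γ + ρ) / 2) * Real.exp (U ω - ρ / 2) ∂P
        = (∫ ω, g (c * Real.exp (X ω + Y ω + Z ω + U ω - (α + β + γ + ρ) / 2)
            * Real.exp ((β + γ + ρ) + (γ + ρ) + ρ)) ∂P) * Real.exp ((γ + ρ) + 2 * ρ) := by
  set v : Fin 4 → ℝ≥0 := ![α.toNNReal, β.toNNReal, γ.toNNReal, ρ.toNNReal]
  set k : Fin 4 → ℝ := ![0, 1, 2, 3]
  set F : (Fin 4 → ℝ) → ℝ := fun x => g (c * exp (∑ i, x i - (α + β + γ + ρ) / 2))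
  have hV : ∀ i, Measurable (![X, Y, Z, U] i) := fun i => by fin_cases i <;> assumption
  have hlaw : ∀ i, P.map (![X, Y, Z, U] i) = gaussianReal 0 (v i) := fun i => by
    fin_cases i <;> assumption
  have hF : Measurable F := by fun_prop
  have hlhs : ∀ ω, g (c * exp (X ω + Y ω + Z ω + U ω - (α + β + γ + ρ) / 2))
        * exp (Y ω + Z ω + U ω - (β + γ + ρ) / 2) * exp (Z ω + U ω - (γ + ρ) / 2)
        * exp (U ω - ρ / 2)
      = exp (-(β + 2 * γ + 3 * ρ) / 2)
        * (F (fun i => ![X, Y, Z, U] i ω) * exp (∑ i, k i * ![X, Y, Z, U] i ω)) := fun ω => by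
    simp only [F, k, Fin.sum_univ_four, Matrix.cons_val, mul_assoc, ← exp_add]
    rw [mul_left_comm, ← exp_add]
    congr 2
    ring
  have hrhs : ∀ ω, F (fun i => ![X, Y, Z, U] i ω + v i * k i)
      = g (c * exp (X ω + Y ω + Z ω + U ω - (α + β + γ + ρ) / 2)
        * exp ((β + γ + ρ) + (γ + ρ) + ρ)) := fun ω => by
    simp only [F, k, v, Fin.sum_univ_four, Matrix.cons_val, mul_assoc, ← exp_add,
      Real.coe_toNNReal _ hβ, Real.coe_toNNReal _ hγ, Real.coe_toNNReal _ hρ]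
    congr 3
    ring
  simp_rw [hlhs]
  refine ⟨((hindep.integrable_mul_exp_sum_iff hV hlaw hF k).mpr ?_).const_mul _, ?_⟩
  · simpa only [hrhs] using hInt
  rw [integral_const_mul, hindep.integral_mul_exp_sum hV hlaw hF k]
  simp only [hrhs, Fin.sum_univ_four, Matrix.cons_val, v, k, Real.coe_toNNReal _ hβ,
    Real.coe_toNNReal _ hγ, Real.coe_toNNReal _ hρ]
  rw [← mul_assoc, ← exp_add, mul_comm]
  congr 2
  ring

/-- With `M = e^{X+Y+Z+U−(α+β+γ+ρ)/2}`, `R₁ = e^{Y+Z+U−(β+γ+ρ)/2}`,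
`R₂ = e^{Z+U−(γ+ρ)/2}`, `R₃ = e^{U−ρ/2}` for independent centered Gaussians `X, Y, Z, U`
of variances `α, β, γ, ρ`: if `g(c·M·e^{(β+γ+ρ)+(γ+ρ)+ρ})` is integrable, then
`g(c·M)·R₁·R₂·R₃` is integrable and
`E[g(c·M)·R₁·R₂·R₃] = E[g(c·M·e^{(β+γ+ρ)+(γ+ρ)+ρ})]·e^{(γ+ρ)+2ρ}`. -/
theorem statement6 {Ω : Type*} [MeasurableSpace Ω] (P : Measure Ω) [IsProbabilityMeasure P]
    (α β γ ρ : ℝ) (hα : 0 ≤ α) (hβ : 0 ≤ β) (hγ : 0 ≤ γ) (hρ : 0 ≤ ρ)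
    (X Y Z U : Ω → ℝ) (hX : Measurable X) (hY : Measurable Y) (hZ : Measurable Z)
    (hU : Measurable U)
    (hindep : iIndepFun ![X, Y, Z, U] P)
    (hXlaw : Measure.map X P = gaussianReal 0 α.toNNReal)
    (hYlaw : Measure.map Y P = gaussianReal 0 β.toNNReal)
    (hZlaw : Measure.map Z P = gaussianReal 0 γ.toNNReal)
    (hUlaw : Measure.map U P = gaussianReal 0 ρ.toNNReal)
    (g : ℝ → ℝ) (hg : Measurable g) (c : ℝ)
    (hInt : Integrable
      (fun ω => g (c * Real.exp (X ω + Y ω + Z ω + U ω - (α + β + γ + ρ) / 2)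
        * Real.exp ((β + γ + ρ) + (γ + ρ) + ρ))) P) :
    Integrable
        (fun ω => g (c * Real.exp (X ω + Y ω + Z ω + U ω - (α + β + γ + ρ) / 2))
          * Real.exp (Y ω + Z ω + U ω - (β + γ + ρ) / 2)
          * Real.exp (Z ω + U ω - (γ + ρ) / 2) * Real.exp (U ω - ρ / 2)) P ∧
      ∫ ω, g (c * Real.exp (X ω + Y ω + Z ω + U ω - (α + β + γ + ρ) / 2))
          * Real.exp (Y ω + Z ω + U ω - (β + γ + ρ) / 2)
          * Real.exp (Z ω + U ω - (γ + ρ) / 2) * Real.exp (U ω - ρ / 2) ∂P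
        = (∫ ω, g (c * Real.exp (X ω + Y ω + Z ω + U ω - (α + β + γ + ρ) / 2)
            * Real.exp ((β + γ + ρ) + (γ + ρ) + ρ)) ∂P) * Real.exp ((γ + ρ) + 2 * ρ) :=
  statement6_general P α β γ ρ hβ hγ hρ X Y Z U hX hY hZ hU hindep hXlaw hYlaw hZlaw hUlaw g hg c
    hInt
end

section
/- For every k > 0 (with f, v, B, η fixed), the map k ↦ V_B(f, k) is differentiable at k and its derivative equals −η·B·Φ(η·d_2(f, k)). -/
/-- Standard normal density `φ`. -/
noncomputable def nPDF (x : ℝ) : ℝ := (Real.sqrt (2 * Real.pi))⁻¹ * Real.exp (-(x ^ 2) / 2)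

/-- Standard normal cumulative distribution function `Φ`. -/
noncomputable def nCDF (x : ℝ) : ℝ := ∫ t in Set.Iic x, nPDF t

/-- `d_1(f, k) = ln(f/k)/v + v/2`. -/
noncomputable def dOne (v f k : ℝ) : ℝ := Real.log (f / k) / v + v / 2

/-- `d_2(f, k) = d_1(f, k) − v`. -/
noncomputable def dTwo (v f k : ℝ) : ℝ := dOne v f k - v

/-- Black formula `V_B(f, k) = η·B·(f·Φ(η·d_1(f,k)) − k·Φ(η·d_2(f,k)))`. -/
noncomputable def blackFormula (v B η f k : ℝ) : ℝ :=
  η * B * (f * nCDF (η * dOne v f k) - k * nCDF (η * dTwo v f k))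

/-!
Differentiating in the strike `k`, the chain rule produces, besides `-η B Φ(η d₂)`, the terms
`η B (f φ(η d₁) - k φ(η d₂)) · η ∂d₁/∂k` (note `∂d₁/∂k = ∂d₂/∂k`). They cancel because of the
classical identity `f φ(d₁) = k φ(d₂)`: since `d₁² - d₂² = (d₁ - d₂)(d₁ + d₂) = 2 ln(f/k)`, the
ratio `φ(d₂)/φ(d₁)` is `exp(ln(f/k)) = f/k`.
-/

open MeasureTheory

theorem hasDerivAt_integral_Iic {g : ℝ → ℝ} (hg : Continuous g) (hgi : Integrable g) (x : ℝ) :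
    HasDerivAt (fun y => ∫ t in Set.Iic y, g t) (g x) x := by
  have split : (fun y => ∫ t in Set.Iic y, g t) =
      fun y => (∫ t in Set.Iic 0, g t) + ∫ t in (0 : ℝ)..y, g t := by
    funext y
    rw [← intervalIntegral.integral_Iic_sub_Iic hgi.integrableOn hgi.integrableOn]
    ring
  rw [split]
  exact ((hg.integral_hasStrictDerivAt 0 x).hasDerivAt).const_add _

theorem continuous_nPDF : Continuous nPDF := by
  unfold nPDF
  fun_prop

theorem integrable_nPDF : Integrable nPDF := by
  have h : nPDF = fun x => (Real.sqrt (2 * Real.pi))⁻¹ * Real.exp (-(1 / 2 : ℝ) * x ^ 2) := by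
    funext x
    unfold nPDF
    ring_nf
  rw [h]
  exact (integrable_exp_neg_mul_sq (by norm_num)).const_mul _

theorem hasDerivAt_nCDF (x : ℝ) : HasDerivAt nCDF (nPDF x) x :=
  hasDerivAt_integral_Iic continuous_nPDF integrable_nPDF x

theorem nPDF_mul_of_sq_eq_one {η : ℝ} (hη : η ^ 2 = 1) (x : ℝ) : nPDF (η * x) = nPDF x := by
  simp only [nPDF, mul_pow, hη, one_mul]

theorem hasDerivAt_dOne {v f k : ℝ} (hf : f ≠ 0) (hk : k ≠ 0) :
    HasDerivAt (dOne v f) (-(k * v)⁻¹) k := by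
  have hlog : HasDerivAt (fun x => Real.log (f / x)) (-k⁻¹) k := by
    have hquot := (hasDerivAt_const k f).div (hasDerivAt_id k) hk
    refine (hquot.log (div_ne_zero hf hk)).congr_deriv ?_
    simp only [id, Pi.div_apply]
    field_simp
    ring
  refine ((hlog.div_const v).add_const (v / 2)).congr_deriv ?_
  rw [mul_inv, neg_div, div_eq_mul_inv]

theorem hasDerivAt_dTwo {v f k : ℝ} (hf : f ≠ 0) (hk : k ≠ 0) :
    HasDerivAt (dTwo v f) (-(k * v)⁻¹) k :=
  (hasDerivAt_dOne hf hk).sub_const v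

theorem mul_nPDF_dOne_eq_mul_nPDF_dTwo {v f k : ℝ} (hf : 0 < f) (hk : 0 < k) (hv : v ≠ 0) :
    f * nPDF (dOne v f k) = k * nPDF (dTwo v f k) := by
  have hsq : dOne v f k ^ 2 = dTwo v f k ^ 2 + 2 * Real.log (f / k) := by
    unfold dTwo dOne
    field_simp
    ring
  have hexp : Real.exp (-(dOne v f k ^ 2) / 2) = Real.exp (-(dTwo v f k ^ 2) / 2) * (k / f) := by
    rw [hsq, ← Real.exp_log (div_pos hk hf), ← Real.exp_add, Real.log_div hk.ne' hf.ne',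
      Real.log_div hf.ne' hk.ne']
    ring_nf
  unfold nPDF
  rw [hexp]
  field_simp

theorem statement15_general (f k v B η : ℝ) (hf : 0 < f) (hk : 0 < k) (hv : 0 < v)
    (hη : η = 1 ∨ η = -1) :
    HasDerivAt (fun x : ℝ => blackFormula v B η f x) (-η * B * nCDF (η * dTwo v f k)) k := by
  have hη2 : η ^ 2 = 1 := by rcases hη with rfl | rfl <;> norm_num
  have hd1 := ((hasDerivAt_dOne (v := v) hf.ne' hk.ne').const_mul η)
  have hd2 := ((hasDerivAt_dTwo (v := v) hf.ne' hk.ne').const_mul η)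
  have hV := ((((hasDerivAt_nCDF _).comp k hd1).const_mul f).sub
    ((hasDerivAt_id k).mul ((hasDerivAt_nCDF _).comp k hd2))).const_mul (η * B)
  have hcancel := mul_nPDF_dOne_eq_mul_nPDF_dTwo (v := v) hf hk hv.ne'
  rw [← nPDF_mul_of_sq_eq_one hη2, ← nPDF_mul_of_sq_eq_one hη2 (dTwo v f k)] at hcancel
  refine hV.congr_deriv ?_
  simp only [id_eq, one_mul, Function.comp_apply]
  linear_combination η * B * (η * -(k * v)⁻¹) * hcancel

/-- For every `k > 0`, the map `k ↦ V_B(f, k)` is differentiable at `k`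
with derivative `−η·B·Φ(η·d_2(f, k))`. -/
theorem statement15 (f k v B η : ℝ) (hf : 0 < f) (hk : 0 < k) (hv : 0 < v) (hB : 0 < B)
    (hη : η = 1 ∨ η = -1) :
    HasDerivAt (fun x : ℝ => blackFormula v B η f x) (-η * B * nCDF (η * dTwo v f k)) k :=
  statement15_general f k v B η hf hk hv hη
end
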